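/- arXiv:1911.09000 — 2 statements merged into one kernel-verified Lean document; each statement's English description precedes it below -/
import Mathlib

section
/- Let n ≥ 2, 0 < α < min{2,n}, a ≥ 0, p ≥ 1, and let u, v : ℝⁿ → [0,∞) be continuous with the representation hypothesis holding for (u, v; α, a, p). Then there exists C > 0 such that for every R > 0, ∫_R^∞ R^α r^{−1}(r²−R²)^{−α/2} ū(r) dr ≥ C ∫_{R/2}^∞ r^{α+a−1} v̄(r)^p dr. -/
open MeasureTheory Metric Set

/-- Spherical average of `w` over the sphere of radius `r` centered at the origin,
with respect to the `(n-1)`-dimensional (Hausdorff) surface measure. -/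
noncomputable def sphAvg (n : ℕ) (w : EuclideanSpace ℝ (Fin n) → ℝ) (r : ℝ) : ℝ :=
  ⨍ x in sphere (0 : EuclideanSpace ℝ (Fin n)) r, w x ∂(μH[(n : ℝ) - 1])
/-- The nonlocal average `F_α[w](R) = ∫_R^∞ R^α r⁻¹ (r²-R²)^{-α/2} w̄(r) dr`. -/
noncomputable def nonlocalAvg (n : ℕ) (α : ℝ) (w : EuclideanSpace ℝ (Fin n) → ℝ) (R : ℝ) : ℝ :=
  ∫ r in Ioi R, R ^ α * r⁻¹ * (r ^ 2 - R ^ 2) ^ (-(α / 2)) * sphAvg n w r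
/-- The representation hypothesis for `(u, v; α, a, p)`: there are `c₁, c₂ > 0` such that
for every `R > 0` all the integrals below are finite and
`u(0) = c₁ ∫₀^R r^{α+a-1} (∫₀^{R²/r²-1} s^{α/2-1}(1+s)^{-n/2} ds) (v^p)̄(r) dr
      + c₂ ∫_R^∞ R^α r⁻¹ (r²-R²)^{-α/2} ū(r) dr`. -/
def ReprHyp (n : ℕ) (α a p : ℝ) (u v : EuclideanSpace ℝ (Fin n) → ℝ) : Prop :=
  ∃ c₁ > (0 : ℝ), ∃ c₂ > (0 : ℝ), ∀ R > (0 : ℝ),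
    (∀ r ∈ Ioo (0 : ℝ) R, IntegrableOn
      (fun s => s ^ (α / 2 - 1) * (1 + s) ^ (-((n : ℝ) / 2))) (Ioo 0 (R ^ 2 / r ^ 2 - 1))) ∧
    IntegrableOn (fun r => r ^ (α + a - 1) *
      (∫ s in Ioo 0 (R ^ 2 / r ^ 2 - 1), s ^ (α / 2 - 1) * (1 + s) ^ (-((n : ℝ) / 2))) *
      sphAvg n (fun y => v y ^ p) r) (Ioo 0 R) ∧
    IntegrableOn (fun r => R ^ α * r⁻¹ * (r ^ 2 - R ^ 2) ^ (-(α / 2)) * sphAvg n u r)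
      (Ioi R) ∧
    u 0 = c₁ * (∫ r in Ioo 0 R, r ^ (α + a - 1) *
      (∫ s in Ioo 0 (R ^ 2 / r ^ 2 - 1), s ^ (α / 2 - 1) * (1 + s) ^ (-((n : ℝ) / 2))) *
      sphAvg n (fun y => v y ^ p) r) + c₂ * nonlocalAvg n α u R

lemma sphAvg_nonneg {n : ℕ} {w : EuclideanSpace ℝ (Fin n) → ℝ} (hw : ∀ x, 0 ≤ w x) (r : ℝ) :
    0 ≤ sphAvg n w r := by
  rw [sphAvg, setAverage_eq]
  exact smul_nonneg (by positivity) (integral_nonneg fun x => hw x)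

lemma sphAvg_rpow_le {n : ℕ} {p : ℝ} (hp : 1 ≤ p) {v : EuclideanSpace ℝ (Fin n) → ℝ}
    (hvC : Continuous v) (hv0 : ∀ x, 0 ≤ v x) (r : ℝ) :
    sphAvg n v r ^ p ≤ sphAvg n (fun y => v y ^ p) r := by
  have hp0 : (0:ℝ) ≤ p := le_trans zero_le_one hp
  have hpne : p ≠ 0 := by linarith
  set μs := (μH[(n : ℝ) - 1] : Measure (EuclideanSpace ℝ (Fin n))).restrict
    (sphere (0 : EuclideanSpace ℝ (Fin n)) r) with hμs
  have havg : sphAvg n v r = ⨍ x, v x ∂μs := rfl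
  have havg' : sphAvg n (fun y => v y ^ p) r = ⨍ x, v x ^ p ∂μs := rfl
  rcases eq_or_ne μs 0 with h0 | h0
  · rw [havg, havg', h0, average_zero_measure, average_zero_measure,
      Real.zero_rpow hpne]
  rcases eq_or_ne (μs univ) ⊤ with htop | htop
  · rw [havg, havg', average_eq, average_eq, measureReal_def, htop]
    simp [Real.zero_rpow hpne]
  · haveI : IsFiniteMeasure μs := ⟨lt_top_iff_ne_top.2 htop⟩
    haveI : NeZero μs := ⟨h0⟩
    have hsph : ∀ᵐ x ∂μs, x ∈ sphere (0 : EuclideanSpace ℝ (Fin n)) r :=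
      ae_restrict_mem (isClosed_sphere).measurableSet
    have hint : ∀ (w : EuclideanSpace ℝ (Fin n) → ℝ), Continuous w → Integrable w μs := by
      intro w hw
      obtain ⟨C, hC⟩ := (isCompact_sphere (0 : EuclideanSpace ℝ (Fin n))
        r).exists_bound_of_continuousOn hw.continuousOn
      exact ⟨hw.aestronglyMeasurable, HasFiniteIntegral.of_bounded (C := C)
        (hsph.mono fun x hx => hC x hx)⟩
    have hv_int : Integrable v μs := hint v hvC
    have hvp_int : Integrable (fun x => v x ^ p) μs :=
      hint _ ((Real.continuous_rpow_const hp0).comp hvC)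
    have := (convexOn_rpow hp).map_average_le
      (Real.continuous_rpow_const hp0).continuousOn isClosed_Ici
      (ae_of_all _ fun x => hv0 x) hv_int hvp_int
    rw [havg, havg']
    exact this

noncomputable def ker (n : ℕ) (α : ℝ) : ℝ → ℝ :=
  fun s => s ^ (α / 2 - 1) * (1 + s) ^ (-((n : ℝ) / 2))

noncomputable def kerInt (n : ℕ) (α Q r : ℝ) : ℝ :=
  ∫ s in Ioo 0 (Q ^ 2 / r ^ 2 - 1), ker n α s

lemma ker_nonneg (n : ℕ) (α : ℝ) {s : ℝ} (hs : 0 < s) : 0 ≤ ker n α s :=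
  mul_nonneg (Real.rpow_nonneg hs.le _) (Real.rpow_nonneg (by linarith) _)

lemma ker_ae_nonneg (n : ℕ) (α t : ℝ) : 0 ≤ᵐ[volume.restrict (Ioo (0:ℝ) t)] ker n α := by
  filter_upwards [ae_restrict_mem measurableSet_Ioo] with s hs
  exact ker_nonneg n α hs.1

lemma kerInt_nonneg (n : ℕ) (α Q r : ℝ) : 0 ≤ kerInt n α Q r :=
  setIntegral_nonneg measurableSet_Ioo fun s hs => ker_nonneg n α hs.1

set_option maxHeartbeats 1000000 in
/-- The nonlocal average of `u` dominates a weighted tail integral of `v̄^p`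
(inequality (2.7) of the paper); both sides are interpreted in `[0, ∞]`. -/
theorem nonlocalAvg_ge_tail_integral (n : ℕ) (hn : 2 ≤ n) (α a p : ℝ)
    (hα1 : 0 < α) (hα2 : α < min 2 (n : ℝ)) (ha : 0 ≤ a) (hp : 1 ≤ p)
    (u v : EuclideanSpace ℝ (Fin n) → ℝ)
    (huC : Continuous u) (hvC : Continuous v)
    (hu0 : ∀ x, 0 ≤ u x) (hv0 : ∀ x, 0 ≤ v x)
    (hrep : ReprHyp n α a p u v) :
    ∃ C > (0 : ℝ), ∀ R > (0 : ℝ),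
      ENNReal.ofReal C *
        ∫⁻ r in Ioi (R / 2), ENNReal.ofReal (r ^ (α + a - 1) * sphAvg n v r ^ p) ≤
      ENNReal.ofReal (nonlocalAvg n α u R) := by
  obtain ⟨c₁, hc₁, c₂, hc₂, hRep⟩ := hrep
  have hA0 : ∀ r, 0 ≤ sphAvg n (fun y => v y ^ p) r :=
    fun r => sphAvg_nonneg (fun x => Real.rpow_nonneg (hv0 x) p) r
  -- the constant δ
  have hgint8 : IntegrableOn (ker n α) (Ioo (0:ℝ) 8) := by
    have h := (hRep 3 (by norm_num)).1 1 (by constructor <;> norm_num)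
    have e : Ioo (0:ℝ) ((3:ℝ) ^ 2 / (1:ℝ) ^ 2 - 1) = Ioo (0:ℝ) 8 := by norm_num
    rw [e] at h
    exact h
  set δ : ℝ := ∫ s in Ioo (3:ℝ) 4, ker n α s with hδdef
  have hδint : IntegrableOn (ker n α) (Ioo (3:ℝ) 4) :=
    hgint8.mono_set (fun x hx => ⟨by linarith [hx.1], by linarith [hx.2]⟩)
  have hδpos : 0 < δ := by
    rw [hδdef]
    refine (setIntegral_pos_iff_support_of_nonneg_ae ?_ hδint).2 ?_
    · filter_upwards [ae_restrict_mem measurableSet_Ioo] with s hs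
      exact ker_nonneg n α (by linarith [hs.1])
    · have hsub : Ioo (3:ℝ) 4 ⊆ Function.support (ker n α) ∩ Ioo 3 4 := by
        intro s hs
        refine ⟨ne_of_gt (mul_pos (Real.rpow_pos_of_pos (by linarith [hs.1]) _)
          (Real.rpow_pos_of_pos (by linarith [hs.1]) _)), hs⟩
      calc (0:ENNReal) < volume (Ioo (3:ℝ) 4) := by rw [Real.volume_Ioo]; norm_num
        _ ≤ volume (Function.support (ker n α) ∩ Ioo 3 4) := measure_mono hsub
  refine ⟨c₁ * δ / c₂, by positivity, ?_⟩
  intro R hR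
  have hR2 : 0 < R / 2 := half_pos hR
  obtain ⟨-, hφR_int, -, heqR⟩ := hRep R hR
  -- main per-truncation estimate
  have main : ∀ m : ℕ,
      AEMeasurable (fun r => ENNReal.ofReal (r ^ (α + a - 1) * sphAvg n (fun y => v y ^ p) r))
        (volume.restrict (Ioo (R/2) (2*R + m))) ∧
      (∫⁻ r in Ioo (R/2) (2*R + m),
          ENNReal.ofReal (r ^ (α + a - 1) * sphAvg n (fun y => v y ^ p) r)) ≤
        ENNReal.ofReal (δ⁻¹ * (c₂ / c₁ * nonlocalAvg n α u R)) := by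
    intro m
    set b : ℝ := 2*R + m with hbdef
    have hm0 : (0:ℝ) ≤ m := Nat.cast_nonneg m
    have hb1 : R < b := by rw [hbdef]; linarith
    have hbpos : 0 < b := lt_trans hR hb1
    set Q : ℝ := 4 * b with hQdef
    have hQpos : 0 < Q := by rw [hQdef]; linarith
    have hRQ : R < Q := by rw [hQdef]; linarith
    have hbQ : b < Q := by rw [hQdef]; linarith
    obtain ⟨h1, h2, -, heqQ⟩ := hRep Q hQpos
    have hφR_int' : IntegrableOn
        (fun r => r ^ (α + a - 1) * kerInt n α R r * sphAvg n (fun y => v y ^ p) r)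
        (Ioo 0 R) := hφR_int
    have h1' : ∀ r ∈ Ioo (0:ℝ) Q, IntegrableOn (ker n α) (Ioo 0 (Q ^ 2 / r ^ 2 - 1)) := h1
    have hφQ_int : IntegrableOn
        (fun r => r ^ (α + a - 1) * kerInt n α Q r * sphAvg n (fun y => v y ^ p) r)
        (Ioo 0 Q) := h2
    have hU : ∀ r : ℝ, 0 < r → r < b → (15:ℝ) ≤ Q ^ 2 / r ^ 2 - 1 := by
      intro r hr0 hrb
      rw [le_sub_iff_add_le, le_div_iff₀ (pow_pos hr0 2)]
      rw [hQdef]; nlinarith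
    have hKge : ∀ r : ℝ, 0 < r → r < b → δ ≤ kerInt n α Q r := by
      intro r hr0 hrb
      have h15 := hU r hr0 hrb
      rw [hδdef]
      exact setIntegral_mono_set (h1' r ⟨hr0, by linarith⟩) (ker_ae_nonneg n α _)
        (HasSubset.Subset.eventuallyLE fun s hs => ⟨by linarith [hs.1], by linarith [hs.2]⟩)
    have hKmono : ∀ r ∈ Ioo (0:ℝ) R, kerInt n α R r ≤ kerInt n α Q r := by
      intro r hr
      have hr2 : (0:ℝ) < r ^ 2 := pow_pos hr.1 2
      refine setIntegral_mono_set (h1' r ⟨hr.1, by linarith [hr.2]⟩) (ker_ae_nonneg n α _)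
        (HasSubset.Subset.eventuallyLE (Ioo_subset_Ioo le_rfl ?_))
      have h3 : R ^ 2 / r ^ 2 ≤ Q ^ 2 / r ^ 2 := by
        rw [div_le_div_iff₀ hr2 hr2]
        nlinarith [mul_nonneg (mul_nonneg (sub_nonneg.2 hRQ.le)
          (by linarith : (0:ℝ) ≤ Q + R)) hr2.le]
      linarith
    have hKdiff : ∀ r ∈ Ioo (R/2) R, kerInt n α R r + δ ≤ kerInt n α Q r := by
      intro r hr
      have hr0 : 0 < r := lt_trans hR2 hr.1
      have hrb : r < b := by linarith [hr.2]
      have h15 := hU r hr0 hrb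
      have hU3 : R ^ 2 / r ^ 2 - 1 ≤ 3 := by
        rw [sub_le_iff_le_add, div_le_iff₀ (pow_pos hr0 2)]
        nlinarith [hr.1]
      have hintQ := h1' r ⟨hr0, by linarith⟩
      have hsub : Ioo (0:ℝ) (R ^ 2 / r ^ 2 - 1) ∪ Ioo (3:ℝ) 4 ⊆ Ioo (0:ℝ) (Q ^ 2 / r ^ 2 - 1) := by
        rintro s (hs | hs)
        · exact ⟨hs.1, by linarith [hs.2]⟩
        · exact ⟨by linarith [hs.1], by linarith [hs.2]⟩
      have hdisj : Disjoint (Ioo (0:ℝ) (R ^ 2 / r ^ 2 - 1)) (Ioo (3:ℝ) 4) :=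
        Set.disjoint_left.2 fun s hs hs' => absurd hs.2 (by linarith [hs'.1])
      calc kerInt n α R r + δ
          = ∫ s in (Ioo (0:ℝ) (R ^ 2 / r ^ 2 - 1) ∪ Ioo (3:ℝ) 4), ker n α s :=
            (setIntegral_union hdisj measurableSet_Ioo
              (hintQ.mono_set (fun s hs => hsub (Or.inl hs)))
              (hintQ.mono_set (fun s hs => hsub (Or.inr hs)))).symm
        _ ≤ kerInt n α Q r := setIntegral_mono_set hintQ (ker_ae_nonneg n α _)
              (HasSubset.Subset.eventuallyLE hsub)
    -- abbreviations for the real integrals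
    have hsub1 : Ioo (R/2) R ⊆ Ioo (0:ℝ) R := fun x hx => ⟨lt_trans hR2 hx.1, hx.2⟩
    have hsubRb : Ioo R b ⊆ Ioo (0:ℝ) Q := fun x hx => ⟨lt_trans hR hx.1, by linarith [hx.2]⟩
    have hsubRQ : Ioo R Q ⊆ Ioo (0:ℝ) Q := fun x hx => ⟨lt_trans hR hx.1, hx.2⟩
    have hφQ_int0R : IntegrableOn
        (fun r => r ^ (α + a - 1) * kerInt n α Q r * sphAvg n (fun y => v y ^ p) r)
        (Ioo 0 R) := hφQ_int.mono_set (Ioo_subset_Ioo le_rfl hRQ.le)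
    have hdiff_int : IntegrableOn
        (fun r => r ^ (α + a - 1) * kerInt n α Q r * sphAvg n (fun y => v y ^ p) r
          - r ^ (α + a - 1) * kerInt n α R r * sphAvg n (fun y => v y ^ p) r)
        (Ioo 0 R) := hφQ_int0R.sub hφR_int'
    have hdiff_nonneg : ∀ r ∈ Ioo (0:ℝ) R,
        0 ≤ r ^ (α + a - 1) * kerInt n α Q r * sphAvg n (fun y => v y ^ p) r
          - r ^ (α + a - 1) * kerInt n α R r * sphAvg n (fun y => v y ^ p) r := by
      intro r hr
      have hrp : 0 ≤ r ^ (α + a - 1) := Real.rpow_nonneg hr.1.le _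
      have e : r ^ (α + a - 1) * kerInt n α Q r * sphAvg n (fun y => v y ^ p) r
          - r ^ (α + a - 1) * kerInt n α R r * sphAvg n (fun y => v y ^ p) r
          = r ^ (α + a - 1) * (kerInt n α Q r - kerInt n α R r)
            * sphAvg n (fun y => v y ^ p) r := by ring
      rw [e]
      exact mul_nonneg (mul_nonneg hrp (sub_nonneg.2 (hKmono r hr))) (hA0 r)
    have hφQ_nonneg : ∀ r ∈ Ioo (0:ℝ) Q,
        0 ≤ r ^ (α + a - 1) * kerInt n α Q r * sphAvg n (fun y => v y ^ p) r := fun r hr =>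
      mul_nonneg (mul_nonneg (Real.rpow_nonneg hr.1.le _) (kerInt_nonneg n α Q r)) (hA0 r)
    -- the main real inequality
    have hbound : (∫ r in Ioo (R/2) R,
          (r ^ (α + a - 1) * kerInt n α Q r * sphAvg n (fun y => v y ^ p) r
            - r ^ (α + a - 1) * kerInt n α R r * sphAvg n (fun y => v y ^ p) r))
        + (∫ r in Ioo R b, r ^ (α + a - 1) * kerInt n α Q r * sphAvg n (fun y => v y ^ p) r)
        ≤ c₂ / c₁ * nonlocalAvg n α u R := by
      have hS1 : (∫ r in Ioo (R/2) R,
          (r ^ (α + a - 1) * kerInt n α Q r * sphAvg n (fun y => v y ^ p) r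
            - r ^ (α + a - 1) * kerInt n α R r * sphAvg n (fun y => v y ^ p) r))
          ≤ ∫ r in Ioo 0 R,
          (r ^ (α + a - 1) * kerInt n α Q r * sphAvg n (fun y => v y ^ p) r
            - r ^ (α + a - 1) * kerInt n α R r * sphAvg n (fun y => v y ^ p) r) := by
        refine setIntegral_mono_set hdiff_int ?_ (HasSubset.Subset.eventuallyLE hsub1)
        filter_upwards [ae_restrict_mem measurableSet_Ioo] with r hr
        exact hdiff_nonneg r hr
      have hS2 : (∫ r in Ioo R b,
            r ^ (α + a - 1) * kerInt n α Q r * sphAvg n (fun y => v y ^ p) r)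
          ≤ ∫ r in Ioo R Q,
            r ^ (α + a - 1) * kerInt n α Q r * sphAvg n (fun y => v y ^ p) r := by
        refine setIntegral_mono_set (hφQ_int.mono_set hsubRQ) ?_
          (HasSubset.Subset.eventuallyLE (Ioo_subset_Ioo le_rfl hbQ.le))
        filter_upwards [ae_restrict_mem measurableSet_Ioo] with r hr
        exact hφQ_nonneg r (hsubRQ hr)
      have hsplit : (∫ r in Ioo 0 Q,
            r ^ (α + a - 1) * kerInt n α Q r * sphAvg n (fun y => v y ^ p) r)
          = (∫ r in Ioo 0 R,
            r ^ (α + a - 1) * kerInt n α Q r * sphAvg n (fun y => v y ^ p) r)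
          + ∫ r in Ioo R Q,
            r ^ (α + a - 1) * kerInt n α Q r * sphAvg n (fun y => v y ^ p) r := by
        have e : Ioo (0:ℝ) Q = Ioo 0 R ∪ Ico R Q := (Ioo_union_Ico_eq_Ioo hR hRQ.le).symm
        have hdisj : Disjoint (Ioo (0:ℝ) R) (Ico R Q) :=
          Set.disjoint_left.2 fun s hs hs' => absurd hs.2 (not_lt.2 hs'.1)
        rw [e, setIntegral_union hdisj measurableSet_Ico hφQ_int0R
          (hφQ_int.mono_set (fun x hx => ⟨lt_of_lt_of_le hR hx.1, hx.2⟩)),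
          integral_Ico_eq_integral_Ioo]
      have hIdiff : (∫ r in Ioo 0 Q,
            r ^ (α + a - 1) * kerInt n α Q r * sphAvg n (fun y => v y ^ p) r)
          - (∫ r in Ioo 0 R,
            r ^ (α + a - 1) * kerInt n α R r * sphAvg n (fun y => v y ^ p) r)
          = (∫ r in Ioo 0 R,
            (r ^ (α + a - 1) * kerInt n α Q r * sphAvg n (fun y => v y ^ p) r
              - r ^ (α + a - 1) * kerInt n α R r * sphAvg n (fun y => v y ^ p) r))
          + ∫ r in Ioo R Q,
            r ^ (α + a - 1) * kerInt n α Q r * sphAvg n (fun y => v y ^ p) r := by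
        rw [hsplit, integral_sub hφQ_int0R hφR_int']
        ring
      have hFQ : 0 ≤ nonlocalAvg n α u Q := by
        rw [nonlocalAvg]
        refine setIntegral_nonneg measurableSet_Ioi fun r hr => ?_
        have hrQ : Q < r := hr
        have hr2Q : (0:ℝ) ≤ r ^ 2 - Q ^ 2 := by nlinarith
        refine mul_nonneg (mul_nonneg (mul_nonneg (Real.rpow_nonneg hQpos.le α)
          (inv_nonneg.2 (by linarith))) (Real.rpow_nonneg hr2Q _))
          (sphAvg_nonneg hu0 r)
      have heq2 : c₁ * (∫ r in Ioo 0 Q,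
            r ^ (α + a - 1) * kerInt n α Q r * sphAvg n (fun y => v y ^ p) r)
          + c₂ * nonlocalAvg n α u Q
          = c₁ * (∫ r in Ioo 0 R,
            r ^ (α + a - 1) * kerInt n α R r * sphAvg n (fun y => v y ^ p) r)
          + c₂ * nonlocalAvg n α u R := heqQ.symm.trans heqR
      rw [div_mul_eq_mul_div, le_div_iff₀ hc₁]
      nlinarith [mul_nonneg hc₂.le hFQ, hS1, hS2, hIdiff, heq2]
    -- ENNReal estimates
    have hT1 : (∫⁻ r in Ioo (R/2) R,
          ENNReal.ofReal (r ^ (α + a - 1) * sphAvg n (fun y => v y ^ p) r))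
        ≤ ENNReal.ofReal (δ⁻¹ * ∫ r in Ioo (R/2) R,
          (r ^ (α + a - 1) * kerInt n α Q r * sphAvg n (fun y => v y ^ p) r
            - r ^ (α + a - 1) * kerInt n α R r * sphAvg n (fun y => v y ^ p) r)) := by
      have hint : Integrable (fun r => δ⁻¹ *
          (r ^ (α + a - 1) * kerInt n α Q r * sphAvg n (fun y => v y ^ p) r
            - r ^ (α + a - 1) * kerInt n α R r * sphAvg n (fun y => v y ^ p) r))
          (volume.restrict (Ioo (R/2) R)) := (hdiff_int.mono_set hsub1).const_mul _
      have hnn : 0 ≤ᵐ[volume.restrict (Ioo (R/2) R)] (fun r => δ⁻¹ *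
          (r ^ (α + a - 1) * kerInt n α Q r * sphAvg n (fun y => v y ^ p) r
            - r ^ (α + a - 1) * kerInt n α R r * sphAvg n (fun y => v y ^ p) r)) := by
        filter_upwards [ae_restrict_mem measurableSet_Ioo] with r hr
        exact mul_nonneg (inv_nonneg.2 hδpos.le) (hdiff_nonneg r (hsub1 hr))
      calc (∫⁻ r in Ioo (R/2) R,
            ENNReal.ofReal (r ^ (α + a - 1) * sphAvg n (fun y => v y ^ p) r))
          ≤ ∫⁻ r in Ioo (R/2) R, ENNReal.ofReal (δ⁻¹ *
            (r ^ (α + a - 1) * kerInt n α Q r * sphAvg n (fun y => v y ^ p) r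
              - r ^ (α + a - 1) * kerInt n α R r * sphAvg n (fun y => v y ^ p) r)) := by
            refine lintegral_mono_ae ?_
            filter_upwards [ae_restrict_mem measurableSet_Ioo] with r hr
            refine ENNReal.ofReal_le_ofReal ?_
            have hr0 : 0 < r := lt_trans hR2 hr.1
            have hrp : 0 ≤ r ^ (α + a - 1) := Real.rpow_nonneg hr0.le _
            have hX : 0 ≤ r ^ (α + a - 1) * sphAvg n (fun y => v y ^ p) r :=
              mul_nonneg hrp (hA0 r)
            have hδX : δ * (r ^ (α + a - 1) * sphAvg n (fun y => v y ^ p) r)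
                ≤ r ^ (α + a - 1) * kerInt n α Q r * sphAvg n (fun y => v y ^ p) r
                  - r ^ (α + a - 1) * kerInt n α R r * sphAvg n (fun y => v y ^ p) r := by
              have hk : δ ≤ kerInt n α Q r - kerInt n α R r := by
                have := hKdiff r hr; linarith
              calc δ * (r ^ (α + a - 1) * sphAvg n (fun y => v y ^ p) r)
                  ≤ (kerInt n α Q r - kerInt n α R r)
                    * (r ^ (α + a - 1) * sphAvg n (fun y => v y ^ p) r) :=
                    mul_le_mul_of_nonneg_right hk hX
                _ = r ^ (α + a - 1) * kerInt n α Q r * sphAvg n (fun y => v y ^ p) r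
                  - r ^ (α + a - 1) * kerInt n α R r * sphAvg n (fun y => v y ^ p) r := by
                    ring
            calc r ^ (α + a - 1) * sphAvg n (fun y => v y ^ p) r
                = δ⁻¹ * (δ * (r ^ (α + a - 1) * sphAvg n (fun y => v y ^ p) r)) := by
                  field_simp
              _ ≤ δ⁻¹ * (r ^ (α + a - 1) * kerInt n α Q r * sphAvg n (fun y => v y ^ p) r
                  - r ^ (α + a - 1) * kerInt n α R r * sphAvg n (fun y => v y ^ p) r) :=
                  mul_le_mul_of_nonneg_left hδX (inv_nonneg.2 hδpos.le)
        _ = ENNReal.ofReal (∫ r in Ioo (R/2) R, δ⁻¹ *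
            (r ^ (α + a - 1) * kerInt n α Q r * sphAvg n (fun y => v y ^ p) r
              - r ^ (α + a - 1) * kerInt n α R r * sphAvg n (fun y => v y ^ p) r)) :=
            (ofReal_integral_eq_lintegral_ofReal hint hnn).symm
        _ = ENNReal.ofReal (δ⁻¹ * ∫ r in Ioo (R/2) R,
            (r ^ (α + a - 1) * kerInt n α Q r * sphAvg n (fun y => v y ^ p) r
              - r ^ (α + a - 1) * kerInt n α R r * sphAvg n (fun y => v y ^ p) r)) := by
            rw [integral_const_mul]
    have hT2 : (∫⁻ r in Ioo R b,
          ENNReal.ofReal (r ^ (α + a - 1) * sphAvg n (fun y => v y ^ p) r))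
        ≤ ENNReal.ofReal (δ⁻¹ * ∫ r in Ioo R b,
          r ^ (α + a - 1) * kerInt n α Q r * sphAvg n (fun y => v y ^ p) r) := by
      have hint : Integrable (fun r => δ⁻¹ *
          (r ^ (α + a - 1) * kerInt n α Q r * sphAvg n (fun y => v y ^ p) r))
          (volume.restrict (Ioo R b)) := (hφQ_int.mono_set hsubRb).const_mul _
      have hnn : 0 ≤ᵐ[volume.restrict (Ioo R b)] (fun r => δ⁻¹ *
          (r ^ (α + a - 1) * kerInt n α Q r * sphAvg n (fun y => v y ^ p) r)) := by
        filter_upwards [ae_restrict_mem measurableSet_Ioo] with r hr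
        exact mul_nonneg (inv_nonneg.2 hδpos.le) (hφQ_nonneg r (hsubRb hr))
      calc (∫⁻ r in Ioo R b,
            ENNReal.ofReal (r ^ (α + a - 1) * sphAvg n (fun y => v y ^ p) r))
          ≤ ∫⁻ r in Ioo R b, ENNReal.ofReal (δ⁻¹ *
            (r ^ (α + a - 1) * kerInt n α Q r * sphAvg n (fun y => v y ^ p) r)) := by
            refine lintegral_mono_ae ?_
            filter_upwards [ae_restrict_mem measurableSet_Ioo] with r hr
            refine ENNReal.ofReal_le_ofReal ?_
            have hr0 : 0 < r := lt_trans hR hr.1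
            have hrp : 0 ≤ r ^ (α + a - 1) := Real.rpow_nonneg hr0.le _
            have hX : 0 ≤ r ^ (α + a - 1) * sphAvg n (fun y => v y ^ p) r :=
              mul_nonneg hrp (hA0 r)
            have hk : δ ≤ kerInt n α Q r := hKge r hr0 hr.2
            calc r ^ (α + a - 1) * sphAvg n (fun y => v y ^ p) r
                = δ⁻¹ * (δ * (r ^ (α + a - 1) * sphAvg n (fun y => v y ^ p) r)) := by
                  field_simp
              _ ≤ δ⁻¹ * (r ^ (α + a - 1) * kerInt n α Q r
                    * sphAvg n (fun y => v y ^ p) r) := by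
                  refine mul_le_mul_of_nonneg_left ?_ (inv_nonneg.2 hδpos.le)
                  calc δ * (r ^ (α + a - 1) * sphAvg n (fun y => v y ^ p) r)
                      ≤ kerInt n α Q r * (r ^ (α + a - 1) * sphAvg n (fun y => v y ^ p) r) :=
                        mul_le_mul_of_nonneg_right hk hX
                    _ = r ^ (α + a - 1) * kerInt n α Q r * sphAvg n (fun y => v y ^ p) r := by
                        ring
        _ = ENNReal.ofReal (∫ r in Ioo R b, δ⁻¹ *
            (r ^ (α + a - 1) * kerInt n α Q r * sphAvg n (fun y => v y ^ p) r)) :=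
            (ofReal_integral_eq_lintegral_ofReal hint hnn).symm
        _ = ENNReal.ofReal (δ⁻¹ * ∫ r in Ioo R b,
            r ^ (α + a - 1) * kerInt n α Q r * sphAvg n (fun y => v y ^ p) r) := by
            rw [integral_const_mul]
    -- measurability
    constructor
    · have hKLmono : Monotone (fun t => ∫⁻ s in Ioo (0:ℝ) t, ENNReal.ofReal (ker n α s)) :=
        fun t t' h => lintegral_mono' (Measure.restrict_mono (Ioo_subset_Ioo le_rfl h) le_rfl)
          le_rfl
      have hKLmeas : Measurable fun t => ∫⁻ s in Ioo (0:ℝ) t, ENNReal.ofReal (ker n α s) :=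
        hKLmono.measurable
      have hemeas : Measurable (fun r : ℝ => Q ^ 2 / r ^ 2 - 1) :=
        (measurable_const.div (measurable_id.pow_const 2)).sub measurable_const
      have hrpmeas : Measurable fun r : ℝ => r ^ (α + a - 1) := by measurability
      have hDmeas : Measurable (fun r : ℝ => r ^ (α + a - 1) *
          (∫⁻ s in Ioo (0:ℝ) (Q ^ 2 / r ^ 2 - 1), ENNReal.ofReal (ker n α s)).toReal) :=
        hrpmeas.mul (ENNReal.measurable_toReal.comp (hKLmeas.comp hemeas))
      have hsubQ : Ioo (R/2) b ⊆ Ioo (0:ℝ) Q := fun x hx =>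
        ⟨lt_trans hR2 hx.1, by linarith [hx.2]⟩
      have hφmeas : AEMeasurable
          (fun r => r ^ (α + a - 1) * kerInt n α Q r * sphAvg n (fun y => v y ^ p) r)
          (volume.restrict (Ioo (R/2) b)) := (hφQ_int.mono_set hsubQ).aemeasurable
      have hqmeas : AEMeasurable (fun r => ENNReal.ofReal (r ^ (α + a - 1) *
          ((r ^ (α + a - 1) * kerInt n α Q r * sphAvg n (fun y => v y ^ p) r) /
            (r ^ (α + a - 1) *
              (∫⁻ s in Ioo (0:ℝ) (Q ^ 2 / r ^ 2 - 1), ENNReal.ofReal (ker n α s)).toReal))))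
          (volume.restrict (Ioo (R/2) b)) :=
        ENNReal.measurable_ofReal.comp_aemeasurable
          (hrpmeas.aemeasurable.mul (hφmeas.div hDmeas.aemeasurable))
      refine hqmeas.congr ?_
      filter_upwards [ae_restrict_mem measurableSet_Ioo] with r hr
      have hr0 : 0 < r := lt_trans hR2 hr.1
      have hmemQ : r ∈ Ioo (0:ℝ) Q := hsubQ hr
      have hKL_eq : (∫⁻ s in Ioo (0:ℝ) (Q ^ 2 / r ^ 2 - 1),
          ENNReal.ofReal (ker n α s)).toReal = kerInt n α Q r := by
        rw [← ofReal_integral_eq_lintegral_ofReal (h1' r hmemQ) (ker_ae_nonneg n α _),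
          ENNReal.toReal_ofReal (setIntegral_nonneg measurableSet_Ioo
            fun s hs => ker_nonneg n α hs.1)]
        rfl
      have hKpos : 0 < kerInt n α Q r := lt_of_lt_of_le hδpos (hKge r hr0 hr.2)
      have hrp : 0 < r ^ (α + a - 1) := Real.rpow_pos_of_pos hr0 _
      rw [hKL_eq, mul_div_cancel_left₀ _ (ne_of_gt (mul_pos hrp hKpos))]
    -- the truncated bound
    · have hsplitT : (∫⁻ r in Ioo (R/2) b,
          ENNReal.ofReal (r ^ (α + a - 1) * sphAvg n (fun y => v y ^ p) r))
        ≤ (∫⁻ r in Ioo (R/2) R,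
            ENNReal.ofReal (r ^ (α + a - 1) * sphAvg n (fun y => v y ^ p) r))
          + ∫⁻ r in Ioo R b,
            ENNReal.ofReal (r ^ (α + a - 1) * sphAvg n (fun y => v y ^ p) r) := by
        have hsubU : Ioo (R/2) b ⊆ Ioo (R/2) R ∪ Ico R b := by
          intro x hx
          rcases lt_or_ge x R with h | h
          · exact Or.inl ⟨hx.1, h⟩
          · exact Or.inr ⟨h, hx.2⟩
        calc (∫⁻ r in Ioo (R/2) b,
              ENNReal.ofReal (r ^ (α + a - 1) * sphAvg n (fun y => v y ^ p) r))
            ≤ ∫⁻ r in (Ioo (R/2) R ∪ Ico R b),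
              ENNReal.ofReal (r ^ (α + a - 1) * sphAvg n (fun y => v y ^ p) r) :=
              lintegral_mono' (Measure.restrict_mono hsubU le_rfl) le_rfl
          _ ≤ (∫⁻ r in Ioo (R/2) R,
              ENNReal.ofReal (r ^ (α + a - 1) * sphAvg n (fun y => v y ^ p) r))
              + ∫⁻ r in Ico R b,
              ENNReal.ofReal (r ^ (α + a - 1) * sphAvg n (fun y => v y ^ p) r) :=
              lintegral_union_le _ _ _
          _ = (∫⁻ r in Ioo (R/2) R,
              ENNReal.ofReal (r ^ (α + a - 1) * sphAvg n (fun y => v y ^ p) r))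
              + ∫⁻ r in Ioo R b,
              ENNReal.ofReal (r ^ (α + a - 1) * sphAvg n (fun y => v y ^ p) r) := by
              rw [setLIntegral_congr (Filter.EventuallyEq.symm Ioo_ae_eq_Ico)]
      have hnn1 : 0 ≤ δ⁻¹ * ∫ r in Ioo (R/2) R,
          (r ^ (α + a - 1) * kerInt n α Q r * sphAvg n (fun y => v y ^ p) r
            - r ^ (α + a - 1) * kerInt n α R r * sphAvg n (fun y => v y ^ p) r) :=
        mul_nonneg (inv_nonneg.2 hδpos.le) (setIntegral_nonneg measurableSet_Ioo
          fun r hr => hdiff_nonneg r (hsub1 hr))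
      have hnn2 : 0 ≤ δ⁻¹ * ∫ r in Ioo R b,
          r ^ (α + a - 1) * kerInt n α Q r * sphAvg n (fun y => v y ^ p) r :=
        mul_nonneg (inv_nonneg.2 hδpos.le) (setIntegral_nonneg measurableSet_Ioo
          fun r hr => hφQ_nonneg r (hsubRb hr))
      calc (∫⁻ r in Ioo (R/2) b,
            ENNReal.ofReal (r ^ (α + a - 1) * sphAvg n (fun y => v y ^ p) r))
          ≤ (∫⁻ r in Ioo (R/2) R,
              ENNReal.ofReal (r ^ (α + a - 1) * sphAvg n (fun y => v y ^ p) r))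
            + ∫⁻ r in Ioo R b,
              ENNReal.ofReal (r ^ (α + a - 1) * sphAvg n (fun y => v y ^ p) r) := hsplitT
        _ ≤ ENNReal.ofReal (δ⁻¹ * ∫ r in Ioo (R/2) R,
              (r ^ (α + a - 1) * kerInt n α Q r * sphAvg n (fun y => v y ^ p) r
                - r ^ (α + a - 1) * kerInt n α R r * sphAvg n (fun y => v y ^ p) r))
            + ENNReal.ofReal (δ⁻¹ * ∫ r in Ioo R b,
              r ^ (α + a - 1) * kerInt n α Q r * sphAvg n (fun y => v y ^ p) r) :=
            add_le_add hT1 hT2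
        _ = ENNReal.ofReal ((δ⁻¹ * ∫ r in Ioo (R/2) R,
              (r ^ (α + a - 1) * kerInt n α Q r * sphAvg n (fun y => v y ^ p) r
                - r ^ (α + a - 1) * kerInt n α R r * sphAvg n (fun y => v y ^ p) r))
            + δ⁻¹ * ∫ r in Ioo R b,
              r ^ (α + a - 1) * kerInt n α Q r * sphAvg n (fun y => v y ^ p) r) :=
            (ENNReal.ofReal_add hnn1 hnn2).symm
        _ ≤ ENNReal.ofReal (δ⁻¹ * (c₂ / c₁ * nonlocalAvg n α u R)) := by
            refine ENNReal.ofReal_le_ofReal ?_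
            rw [← mul_add]
            exact mul_le_mul_of_nonneg_left hbound (inv_nonneg.2 hδpos.le)
  -- Fatou argument
  have hJ : (∫⁻ r in Ioi (R/2), ENNReal.ofReal (r ^ (α + a - 1) * sphAvg n v r ^ p))
      ≤ ∫⁻ r in Ioi (R/2),
        ENNReal.ofReal (r ^ (α + a - 1) * sphAvg n (fun y => v y ^ p) r) := by
    refine lintegral_mono_ae ?_
    filter_upwards [ae_restrict_mem measurableSet_Ioi] with r hr
    refine ENNReal.ofReal_le_ofReal (mul_le_mul_of_nonneg_left (sphAvg_rpow_le hp hvC hv0 r)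
      (Real.rpow_nonneg (le_of_lt (lt_trans hR2 hr)) _))
  have hmeasf : ∀ m : ℕ, AEMeasurable ((Ioo (R/2) (2*R + m)).indicator
      (fun r => ENNReal.ofReal (r ^ (α + a - 1) * sphAvg n (fun y => v y ^ p) r)))
      (volume.restrict (Ioi (R/2))) := by
    intro m
    rw [aemeasurable_indicator_iff measurableSet_Ioo, Measure.restrict_restrict
      measurableSet_Ioo, inter_eq_self_of_subset_left Ioo_subset_Ioi_self]
    exact (main m).1
  have hfm : ∀ m : ℕ, (∫⁻ r in Ioi (R/2), (Ioo (R/2) (2*R + m)).indicator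
      (fun r => ENNReal.ofReal (r ^ (α + a - 1) * sphAvg n (fun y => v y ^ p) r)) r)
      = ∫⁻ r in Ioo (R/2) (2*R + m),
        ENNReal.ofReal (r ^ (α + a - 1) * sphAvg n (fun y => v y ^ p) r) := by
    intro m
    rw [lintegral_indicator measurableSet_Ioo, Measure.restrict_restrict measurableSet_Ioo,
      inter_eq_self_of_subset_left Ioo_subset_Ioi_self]
  have hptwise : ∀ᵐ r ∂(volume.restrict (Ioi (R/2))),
      ENNReal.ofReal (r ^ (α + a - 1) * sphAvg n (fun y => v y ^ p) r)
      ≤ Filter.liminf (fun m : ℕ => (Ioo (R/2) (2*R + m)).indicator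
          (fun r => ENNReal.ofReal (r ^ (α + a - 1) * sphAvg n (fun y => v y ^ p) r)) r)
        Filter.atTop := by
    filter_upwards [ae_restrict_mem measurableSet_Ioi] with r hr
    have hev : ∀ᶠ m : ℕ in Filter.atTop, (Ioo (R/2) (2*R + m)).indicator
        (fun r => ENNReal.ofReal (r ^ (α + a - 1) * sphAvg n (fun y => v y ^ p) r)) r
        = ENNReal.ofReal (r ^ (α + a - 1) * sphAvg n (fun y => v y ^ p) r) := by
      rw [Filter.eventually_atTop]
      refine ⟨⌈r⌉₊, fun m hm => ?_⟩
      have h1 : r ≤ (⌈r⌉₊ : ℝ) := Nat.le_ceil r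
      have h2 : ((⌈r⌉₊ : ℕ) : ℝ) ≤ (m : ℝ) := Nat.cast_le.2 hm
      exact indicator_of_mem (show r ∈ Ioo (R/2) (2*R + (m:ℝ)) from ⟨hr, by linarith⟩) _
    rw [Filter.liminf_congr hev, Filter.liminf_const]
  have hliminf : (∫⁻ r in Ioi (R/2),
      ENNReal.ofReal (r ^ (α + a - 1) * sphAvg n (fun y => v y ^ p) r))
      ≤ ENNReal.ofReal (δ⁻¹ * (c₂ / c₁ * nonlocalAvg n α u R)) := by
    calc (∫⁻ r in Ioi (R/2),
          ENNReal.ofReal (r ^ (α + a - 1) * sphAvg n (fun y => v y ^ p) r))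
        ≤ ∫⁻ r in Ioi (R/2), Filter.liminf (fun m : ℕ => (Ioo (R/2) (2*R + m)).indicator
            (fun r => ENNReal.ofReal (r ^ (α + a - 1) * sphAvg n (fun y => v y ^ p) r)) r)
          Filter.atTop := lintegral_mono_ae hptwise
      _ ≤ Filter.liminf (fun m : ℕ => ∫⁻ r in Ioi (R/2), (Ioo (R/2) (2*R + m)).indicator
            (fun r => ENNReal.ofReal (r ^ (α + a - 1) * sphAvg n (fun y => v y ^ p) r)) r)
          Filter.atTop := lintegral_liminf_le' hmeasf
      _ ≤ Filter.liminf (fun _ : ℕ =>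
            ENNReal.ofReal (δ⁻¹ * (c₂ / c₁ * nonlocalAvg n α u R))) Filter.atTop := by
          refine Filter.liminf_le_liminf ?_
          refine Filter.Eventually.of_forall fun m => ?_
          rw [hfm m]
          exact (main m).2
      _ = ENNReal.ofReal (δ⁻¹ * (c₂ / c₁ * nonlocalAvg n α u R)) := Filter.liminf_const _
  calc ENNReal.ofReal (c₁ * δ / c₂) *
        ∫⁻ r in Ioi (R/2), ENNReal.ofReal (r ^ (α + a - 1) * sphAvg n v r ^ p)
      ≤ ENNReal.ofReal (c₁ * δ / c₂) *
        ENNReal.ofReal (δ⁻¹ * (c₂ / c₁ * nonlocalAvg n α u R)) :=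
        mul_le_mul_right (hJ.trans hliminf) _
    _ = ENNReal.ofReal (c₁ * δ / c₂ * (δ⁻¹ * (c₂ / c₁ * nonlocalAvg n α u R))) :=
        (ENNReal.ofReal_mul (by positivity)).symm
    _ = ENNReal.ofReal (nonlocalAvg n α u R) := by
        congr 1
        field_simp
end

section
/- Let 0 < α < 2, 0 < β < 2, a ≥ 0, p ≥ 1 and t ≥ 3 be real numbers, and let w : (0,∞) → [0,∞) be measurable. Then there exists a constant C > 0 (depending only on α, β, a, p, t) such that for every R > 0, ∫_{R/2}^∞ s^{−t} ( ∫_s^∞ s^β r^{−1}(r²−s²)^{−β/2} w(r) dr ) ds ≤ C·R^{1−t−(α+a)/p} ( ∫_{R/2}^∞ r^{α+a−1} w(r)^p dr )^{1/p}, where both sides are allowed to take the value +∞. -/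
open MeasureTheory Set
open scoped ENNReal


lemma lint_Ioi_rpow {c μ : ℝ} (hc : 0 < c) (hμ : μ < -1) :
    ∫⁻ s in Ioi c, ENNReal.ofReal (s ^ μ) = ENNReal.ofReal (c ^ (μ + 1) / (-(μ + 1))) := by
  rw [← ofReal_integral_eq_lintegral_ofReal (integrableOn_Ioi_rpow_of_lt hμ hc)
    ((ae_restrict_mem measurableSet_Ioi).mono fun x hx => Real.rpow_nonneg (hc.trans hx).le μ)]
  rw [integral_Ioi_rpow_of_lt hμ hc]
  congr 1
  rw [div_neg, neg_div]

lemma lint_Ioo_rpow {d ν : ℝ} (hd : 0 < d) (hν : -1 < ν) :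
    ∫⁻ u in Ioo 0 d, ENNReal.ofReal (u ^ ν) = ENNReal.ofReal (d ^ (ν + 1) / (ν + 1)) := by
  rw [Measure.restrict_congr_set Ioo_ae_eq_Ioc]
  have hint : IntegrableOn (fun u : ℝ => u ^ ν) (Ioc 0 d) := by
    have := intervalIntegral.intervalIntegrable_rpow' (a := 0) (b := d) (r := ν) hν
    simpa [intervalIntegrable_iff, uIoc_of_le hd.le] using this
  rw [← ofReal_integral_eq_lintegral_ofReal hint
    ((ae_restrict_mem measurableSet_Ioc).mono fun x hx => Real.rpow_nonneg hx.1.le ν)]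
  congr 1
  rw [← intervalIntegral.integral_of_le hd.le, integral_rpow (Or.inl hν),
    Real.zero_rpow (by linarith), sub_zero]

lemma lint_reflect {a b ν : ℝ} :
    ∫⁻ s in Ioo a b, ENNReal.ofReal ((b - s) ^ ν)
      = ∫⁻ u in Ioo 0 (b - a), ENNReal.ofReal (u ^ ν) := by
  have hmp := Measure.measurePreserving_sub_left (volume : Measure ℝ) b
  have hpre : (fun s : ℝ => b - s) ⁻¹' Ioo 0 (b - a) = Ioo a b := by
    ext x
    simp only [mem_preimage, mem_Ioo, sub_pos, sub_lt_sub_iff_left]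
    constructor
    · rintro ⟨h1, h2⟩; exact ⟨h2, h1⟩
    · rintro ⟨h1, h2⟩; exact ⟨h2, h1⟩
  have := hmp.setLIntegral_comp_preimage (s := Ioo 0 (b - a)) measurableSet_Ioo
    (f := fun u => ENNReal.ofReal (u ^ ν))
    ((measurable_id.pow_const ν).ennreal_ofReal)
  rw [hpre] at this
  exact this

lemma kernel_bound {β t : ℝ} (hβ1 : 0 < β) (hβ2 : β < 2) (ht : 3 ≤ t) {c r : ℝ}
    (hc : 0 < c) (hcr : c < r) :
    ∫⁻ s in Ioo c r, ENNReal.ofReal (s ^ (β - t) * (r ^ 2 - s ^ 2) ^ (-(β / 2)))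
      ≤ ENNReal.ofReal ((2 ^ β / (t - β - 1) + 2 ^ t / (1 - β / 2))
          * (c ^ (β + 1 - t) * r ^ (-β))) := by
  have hr0 : 0 < r := hc.trans hcr
  have hhalf : 0 < r / 2 := by linarith
  have htβ : 0 < t - β - 1 := by linarith
  have hβ2' : 0 < 1 - β / 2 := by linarith
  -- split the domain
  have hsub : Ioo c r ⊆ (Ioo c r ∩ Iic (r / 2)) ∪ Ioo (r / 2) r := by
    intro s hs
    rcases le_or_gt s (r / 2) with h | h
    · exact Or.inl ⟨hs, h⟩
    · exact Or.inr ⟨h, hs.2⟩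
  refine le_trans (lintegral_mono_set hsub) ?_
  refine le_trans (lintegral_union_le _ _ _) ?_
  have piece1 : ∫⁻ s in Ioo c r ∩ Iic (r / 2),
      ENNReal.ofReal (s ^ (β - t) * (r ^ 2 - s ^ 2) ^ (-(β / 2)))
      ≤ ENNReal.ofReal (2 ^ β / (t - β - 1) * (c ^ (β + 1 - t) * r ^ (-β))) := by
    have hmeas : MeasurableSet (Ioo c r ∩ Iic (r / 2)) :=
      measurableSet_Ioo.inter measurableSet_Iic
    have hstep : ∫⁻ s in Ioo c r ∩ Iic (r / 2),
        ENNReal.ofReal (s ^ (β - t) * (r ^ 2 - s ^ 2) ^ (-(β / 2)))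
        ≤ ∫⁻ s in Ioo c r ∩ Iic (r / 2),
            ENNReal.ofReal ((2 ^ β * r ^ (-β)) * s ^ (β - t)) := by
      refine lintegral_mono_ae ((ae_restrict_mem hmeas).mono fun s hs => ?_)
      refine ENNReal.ofReal_le_ofReal ?_
      have hs0 : 0 < s := hc.trans hs.1.1
      have hq : r ^ 2 / 4 ≤ r ^ 2 - s ^ 2 := by nlinarith [hs.2, hs0, mul_le_mul hs.2 hs.2 hs0.le (le_of_lt hhalf)]
      have hX : (r ^ 2 - s ^ 2) ^ (-(β / 2)) ≤ 2 ^ β * r ^ (-β) := by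
        have h1 : (r ^ 2 - s ^ 2) ^ (-(β / 2)) ≤ (r ^ 2 / 4) ^ (-(β / 2)) :=
          Real.rpow_le_rpow_of_nonpos (by positivity) hq (by linarith)
        have h2 : (r ^ 2 / 4 : ℝ) ^ (-(β / 2)) = 2 ^ β * r ^ (-β) := by
          have e1 : (r ^ 2 / 4 : ℝ) = (r / 2) ^ (2 : ℕ) := by ring
          rw [e1, ← Real.rpow_natCast (r / 2) 2, ← Real.rpow_mul hhalf.le]
          have e2 : ((2 : ℕ) : ℝ) * (-(β / 2)) = -β := by push_cast; ring
          rw [e2, Real.div_rpow hr0.le (by norm_num),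
            Real.rpow_neg (by norm_num : (0:ℝ) ≤ 2), div_eq_mul_inv, inv_inv, mul_comm]
        exact h1.trans h2.le
      calc s ^ (β - t) * (r ^ 2 - s ^ 2) ^ (-(β / 2))
          ≤ s ^ (β - t) * (2 ^ β * r ^ (-β)) :=
            mul_le_mul_of_nonneg_left hX (Real.rpow_nonneg hs0.le _)
        _ = (2 ^ β * r ^ (-β)) * s ^ (β - t) := by ring
    refine hstep.trans ?_
    have hK1 : (0:ℝ) ≤ 2 ^ β * r ^ (-β) := by positivity
    simp_rw [ENNReal.ofReal_mul hK1]
    rw [lintegral_const_mul' _ _ ENNReal.ofReal_ne_top]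
    have hmono : ∫⁻ s in Ioo c r ∩ Iic (r / 2), ENNReal.ofReal (s ^ (β - t))
        ≤ ∫⁻ s in Ioi c, ENNReal.ofReal (s ^ (β - t)) :=
      lintegral_mono_set fun s hs => hs.1.1
    refine le_trans (mul_le_mul_right hmono _) ?_
    rw [lint_Ioi_rpow hc (by linarith : β - t < -1)]
    rw [← ENNReal.ofReal_mul hK1]
    refine ENNReal.ofReal_le_ofReal ?_
    have e3 : β - t + 1 = β + 1 - t := by ring
    have e4 : -(β - t + 1) = t - β - 1 := by ring
    rw [e4, e3]
    rw [div_mul_eq_mul_div, mul_comm]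
    rw [div_mul_eq_mul_div]
    apply le_of_eq
    ring
  have piece2 : ∫⁻ s in Ioo (r / 2) r,
      ENNReal.ofReal (s ^ (β - t) * (r ^ 2 - s ^ 2) ^ (-(β / 2)))
      ≤ ENNReal.ofReal (2 ^ t / (1 - β / 2) * (c ^ (β + 1 - t) * r ^ (-β))) := by
    set A2 : ℝ := 2 ^ t * (r ^ (β - t) * r ^ (-(β / 2))) with hA2
    have hA2nn : 0 ≤ A2 := by positivity
    have hstep : ∫⁻ s in Ioo (r / 2) r,
        ENNReal.ofReal (s ^ (β - t) * (r ^ 2 - s ^ 2) ^ (-(β / 2)))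
        ≤ ∫⁻ s in Ioo (r / 2) r, ENNReal.ofReal (A2 * (r - s) ^ (-(β / 2))) := by
      refine lintegral_mono_ae ((ae_restrict_mem measurableSet_Ioo).mono fun s hs => ?_)
      refine ENNReal.ofReal_le_ofReal ?_
      have hs0 : 0 < s := hhalf.trans hs.1
      have hsb : s ^ (β - t) ≤ 2 ^ t * r ^ (β - t) := by
        have h1 : s ^ (β - t) ≤ (r / 2) ^ (β - t) :=
          Real.rpow_le_rpow_of_nonpos hhalf hs.1.le (by linarith)
        have h2 : (r / 2 : ℝ) ^ (β - t) = 2 ^ (t - β) * r ^ (β - t) := by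
          rw [Real.div_rpow hr0.le (by norm_num),
            show (β - t) = -(t - β) by ring,
            Real.rpow_neg (by norm_num : (0:ℝ) ≤ 2), div_eq_mul_inv, inv_inv, mul_comm]
        have h3 : (2:ℝ) ^ (t - β) ≤ 2 ^ t :=
          Real.rpow_le_rpow_of_exponent_le one_le_two (by linarith)
        calc s ^ (β - t) ≤ 2 ^ (t - β) * r ^ (β - t) := h2 ▸ h1
          _ ≤ 2 ^ t * r ^ (β - t) :=
            mul_le_mul_of_nonneg_right h3 (Real.rpow_nonneg hr0.le _)
      have hXsplit : (r ^ 2 - s ^ 2) ^ (-(β / 2))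
          = (r - s) ^ (-(β / 2)) * (r + s) ^ (-(β / 2)) := by
        rw [show r ^ 2 - s ^ 2 = (r - s) * (r + s) by ring,
          Real.mul_rpow (by linarith [hs.2]) (by linarith)]
      have hXb : (r + s) ^ (-(β / 2)) ≤ r ^ (-(β / 2)) :=
        Real.rpow_le_rpow_of_nonpos hr0 (by linarith) (by linarith)
      have hrs : (0:ℝ) ≤ (r - s) ^ (-(β / 2)) := Real.rpow_nonneg (by linarith [hs.2]) _
      calc s ^ (β - t) * (r ^ 2 - s ^ 2) ^ (-(β / 2))
          = s ^ (β - t) * ((r - s) ^ (-(β / 2)) * (r + s) ^ (-(β / 2))) := by rw [hXsplit]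
        _ ≤ (2 ^ t * r ^ (β - t)) * ((r - s) ^ (-(β / 2)) * r ^ (-(β / 2)))  := by
            apply mul_le_mul hsb (mul_le_mul_of_nonneg_left hXb hrs)
              (by positivity) (by positivity)
        _ = A2 * (r - s) ^ (-(β / 2)) := by rw [hA2]; ring
    refine hstep.trans ?_
    simp_rw [ENNReal.ofReal_mul hA2nn]
    rw [lintegral_const_mul' _ _ ENNReal.ofReal_ne_top, lint_reflect,
      show r - r / 2 = r / 2 by ring,
      lint_Ioo_rpow hhalf (by linarith : (-1:ℝ) < -(β / 2)),
      ← ENNReal.ofReal_mul hA2nn]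
    refine ENNReal.ofReal_le_ofReal ?_
    have hhr : (r / 2 : ℝ) ^ (-(β / 2) + 1) ≤ r ^ (-(β / 2) + 1) :=
      Real.rpow_le_rpow hhalf.le (by linarith) (by linarith)
    have collect : r ^ (β - t) * r ^ (-(β / 2)) * r ^ (-(β / 2) + 1)
        = r ^ (β + 1 - t) * r ^ (-β) := by
      rw [← Real.rpow_add hr0, ← Real.rpow_add hr0, ← Real.rpow_add hr0]
      congr 1
      ring
    have hrc : r ^ (β + 1 - t) ≤ c ^ (β + 1 - t) :=
      Real.rpow_le_rpow_of_nonpos hc hcr.le (by linarith)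
    calc A2 * ((r / 2) ^ (-(β / 2) + 1) / (-(β / 2) + 1))
        ≤ A2 * (r ^ (-(β / 2) + 1) / (-(β / 2) + 1)) := by
          gcongr
          linarith
      _ = 2 ^ t * (r ^ (β + 1 - t) * r ^ (-β)) / (-(β / 2) + 1) := by
          rw [hA2]; rw [← collect]; ring
      _ ≤ 2 ^ t * (c ^ (β + 1 - t) * r ^ (-β)) / (-(β / 2) + 1) := by
          gcongr
          linarith
      _ = 2 ^ t / (1 - β / 2) * (c ^ (β + 1 - t) * r ^ (-β)) := by
          rw [show -(β / 2) + 1 = 1 - β / 2 by ring]; ring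
  calc _ ≤ ENNReal.ofReal (2 ^ β / (t - β - 1) * (c ^ (β + 1 - t) * r ^ (-β)))
        + ENNReal.ofReal (2 ^ t / (1 - β / 2) * (c ^ (β + 1 - t) * r ^ (-β))) :=
        add_le_add piece1 piece2
    _ = _ := by
        rw [← ENNReal.ofReal_add (by positivity) (by positivity)]
        congr 1
        ring

lemma holder_bound {α a β p : ℝ} (hα1 : 0 < α) (ha : 0 ≤ a) (hβ1 : 0 < β) (hp : 1 ≤ p)
    (w : ℝ → ℝ) (hw : Measurable w) (hw0 : ∀ r, 0 ≤ w r) :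
    ∃ D > (0:ℝ), ∀ c > (0:ℝ),
      ∫⁻ r in Ioi c, ENNReal.ofReal (r ^ (-(β + 1)) * w r)
        ≤ ENNReal.ofReal (D * c ^ (-β - (α + a) / p)) *
            (∫⁻ r in Ioi c, ENNReal.ofReal (r ^ (α + a - 1) * w r ^ p)) ^ (1 / p) := by
  have haa : 0 < α + a := by linarith
  rcases eq_or_lt_of_le hp with hp1 | hp1
  · -- p = 1
    refine ⟨1, one_pos, fun c hc => ?_⟩
    subst hp1
    simp only [div_one, Real.rpow_one, one_mul, ENNReal.rpow_one]
    have hmono : ∫⁻ r in Ioi c, ENNReal.ofReal (r ^ (-(β + 1)) * w r)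
        ≤ ∫⁻ r in Ioi c, ENNReal.ofReal (c ^ (-β - (α + a)) * (r ^ (α + a - 1) * w r)) := by
      refine lintegral_mono_ae ((ae_restrict_mem measurableSet_Ioi).mono fun r hr => ?_)
      refine ENNReal.ofReal_le_ofReal ?_
      have hr0 : 0 < r := hc.trans hr
      have e1 : r ^ (-(β + 1)) = r ^ (α + a - 1) * r ^ (-β - (α + a)) := by
        rw [← Real.rpow_add hr0]; congr 1; ring
      have e2 : r ^ (-β - (α + a)) ≤ c ^ (-β - (α + a)) :=
        Real.rpow_le_rpow_of_nonpos hc (le_of_lt hr) (by linarith)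
      calc r ^ (-(β + 1)) * w r = r ^ (α + a - 1) * w r * r ^ (-β - (α + a)) := by
            rw [e1]; ring
        _ ≤ r ^ (α + a - 1) * w r * c ^ (-β - (α + a)) := by
            apply mul_le_mul_of_nonneg_left e2
            exact mul_nonneg (Real.rpow_nonneg hr0.le _) (hw0 r)
        _ = c ^ (-β - (α + a)) * (r ^ (α + a - 1) * w r) := by ring
    refine hmono.trans ?_
    simp_rw [ENNReal.ofReal_mul (Real.rpow_nonneg hc.le (-β - (α + a)))]
    rw [lintegral_const_mul' _ _ ENNReal.ofReal_ne_top]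
  · -- 1 < p
    set q : ℝ := p / (p - 1) with hq
    have hp0 : 0 < p := by linarith
    have hpm : 0 < p - 1 := by linarith
    have hq1 : 1 < q := by rw [hq]; rw [lt_div_iff₀ hpm]; linarith
    have hq0 : 0 < q := by linarith
    have hpq : p.HolderConjugate q := (Real.holderConjugate_iff_eq_conjExponent hp1).mpr hq
    have h1q : 1 / q = 1 - 1 / p := by rw [hq]; field_simp
    set μ' : ℝ := -(β + 1) - (α + a - 1) / p with hμ'
    set μ : ℝ := μ' * q with hμdef
    have hqp : q / p = q - 1 := by rw [hq]; field_simp; ring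
    have hμlt : μ < -1 := by
      have e : μ = -(β * q) - q - (α + a - 1) * (q / p) := by rw [hμdef, hμ']; ring
      rw [e, hqp]
      nlinarith [mul_pos haa (sub_pos.mpr hq1), mul_pos hβ1 hq0]
    have hμ1 : 0 < -(μ + 1) := by linarith
    refine ⟨(-(μ + 1)) ^ (-(1 / q)), Real.rpow_pos_of_pos hμ1 _, fun c hc => ?_⟩
    set f : ℝ → ℝ≥0∞ := fun r => ENNReal.ofReal (r ^ ((α + a - 1) / p) * w r) with hf
    set g : ℝ → ℝ≥0∞ := fun r => ENNReal.ofReal (r ^ μ') with hg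
    have hfm : AEMeasurable f (volume.restrict (Ioi c)) :=
      (((measurable_id.pow_const _).mul hw).ennreal_ofReal).aemeasurable
    have hgm : AEMeasurable g (volume.restrict (Ioi c)) :=
      ((measurable_id.pow_const _).ennreal_ofReal).aemeasurable
    have step0 : ∫⁻ r in Ioi c, ENNReal.ofReal (r ^ (-(β + 1)) * w r)
        = ∫⁻ r in Ioi c, (f * g) r := by
      refine setLIntegral_congr_fun measurableSet_Ioi (fun r hr => ?_)
      have hr0 : 0 < r := hc.trans hr
      simp only [Pi.mul_apply, hf, hg]
      rw [← ENNReal.ofReal_mul (mul_nonneg (Real.rpow_nonneg hr0.le _) (hw0 r))]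
      congr 1
      have e1 : r ^ ((α + a - 1) / p) * r ^ μ' = r ^ (-(β + 1)) := by
        rw [← Real.rpow_add hr0]; congr 1; rw [hμ']; ring
      calc r ^ (-(β + 1)) * w r = r ^ ((α + a - 1) / p) * r ^ μ' * w r := by rw [e1]
        _ = r ^ ((α + a - 1) / p) * w r * r ^ μ' := by ring
    have step1 := ENNReal.lintegral_mul_le_Lp_mul_Lq (volume.restrict (Ioi c)) hpq hfm hgm
    have step2 : ∫⁻ r in Ioi c, f r ^ p
        = ∫⁻ r in Ioi c, ENNReal.ofReal (r ^ (α + a - 1) * w r ^ p) := by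
      refine setLIntegral_congr_fun measurableSet_Ioi (fun r hr => ?_)
      have hr0 : 0 < r := hc.trans hr
      rw [hf]
      rw [ENNReal.ofReal_rpow_of_nonneg
        (mul_nonneg (Real.rpow_nonneg hr0.le _) (hw0 r)) hp0.le]
      congr 1
      rw [Real.mul_rpow (Real.rpow_nonneg hr0.le _) (hw0 r),
        ← Real.rpow_mul hr0.le, div_mul_cancel₀ _ hp0.ne']
    have step3 : ∫⁻ r in Ioi c, g r ^ q
        = ENNReal.ofReal (c ^ (μ + 1) / (-(μ + 1))) := by
      rw [show (∫⁻ r in Ioi c, g r ^ q) = ∫⁻ r in Ioi c, ENNReal.ofReal (r ^ μ) from ?_]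
      · exact lint_Ioi_rpow hc hμlt
      refine setLIntegral_congr_fun measurableSet_Ioi (fun r hr => ?_)
      have hr0 : 0 < r := hc.trans hr
      rw [hg, ENNReal.ofReal_rpow_of_nonneg (Real.rpow_nonneg hr0.le _) hq0.le,
        ← Real.rpow_mul hr0.le, ← hμdef]
    have step4 : (ENNReal.ofReal (c ^ (μ + 1) / (-(μ + 1)))) ^ (1 / q)
        = ENNReal.ofReal ((-(μ + 1)) ^ (-(1 / q)) * c ^ (-β - (α + a) / p)) := by
      rw [ENNReal.ofReal_rpow_of_nonneg
        (div_nonneg (Real.rpow_nonneg hc.le _) hμ1.le) (by positivity)]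
      congr 1
      rw [Real.div_rpow (Real.rpow_nonneg hc.le _) hμ1.le, ← Real.rpow_mul hc.le]
      have e2 : (μ + 1) * (1 / q) = -β - (α + a) / p := by
        have : μ * (1 / q) = μ' := by rw [hμdef]; field_simp
        have e3 : (μ + 1) * (1 / q) = μ' + 1 / q := by rw [add_mul, this, one_mul]
        rw [e3, hμ', h1q]; ring
      rw [e2, div_eq_mul_inv, ← Real.rpow_neg hμ1.le, mul_comm]
    calc ∫⁻ r in Ioi c, ENNReal.ofReal (r ^ (-(β + 1)) * w r)
        = ∫⁻ r in Ioi c, (f * g) r := step0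
      _ ≤ (∫⁻ r in Ioi c, f r ^ p) ^ (1 / p) * (∫⁻ r in Ioi c, g r ^ q) ^ (1 / q) := step1
      _ = ENNReal.ofReal ((-(μ + 1)) ^ (-(1 / q)) * c ^ (-β - (α + a) / p)) *
            (∫⁻ r in Ioi c, ENNReal.ofReal (r ^ (α + a - 1) * w r ^ p)) ^ (1 / p) := by
          rw [step2, step3, step4, mul_comm]

lemma tonelli_tail {c : ℝ} (F : ℝ × ℝ → ℝ≥0∞) (hF : Measurable F) :
    ∫⁻ s in Ioi c, ∫⁻ r in Ioi s, F (s, r)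
      = ∫⁻ r in Ioi c, ∫⁻ s in Ioo c r, F (s, r) := by
  set G : ℝ × ℝ → ℝ≥0∞ := fun z => {q : ℝ × ℝ | q.1 < q.2}.indicator F z with hG
  have hGm : Measurable G := hF.indicator (measurableSet_lt measurable_fst measurable_snd)
  have h1 : ∫⁻ s in Ioi c, ∫⁻ r in Ioi s, F (s, r)
      = ∫⁻ s in Ioi c, ∫⁻ r in Ioi c, G (s, r) := by
    refine setLIntegral_congr_fun measurableSet_Ioi (fun s hs => ?_)
    have : ∫⁻ r in Ioi c, G (s, r) = ∫⁻ r in Ioi c, (Ioi s).indicator (fun r => F (s, r)) r := by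
      refine lintegral_congr fun r => ?_
      by_cases h : s < r
      · simp [hG, indicator_of_mem, h, mem_Ioi]
      · simp [hG, indicator_of_notMem, h, mem_Ioi]
    rw [this, lintegral_indicator measurableSet_Ioi,
      Measure.restrict_restrict measurableSet_Ioi,
      inter_eq_left.mpr (Ioi_subset_Ioi (le_of_lt hs))]
  have h2 : ∫⁻ s in Ioi c, ∫⁻ r in Ioi c, G (s, r)
      = ∫⁻ r in Ioi c, ∫⁻ s in Ioi c, G (s, r) := by
    exact lintegral_lintegral_swap (hGm.aemeasurable)
  have h3 : ∫⁻ r in Ioi c, ∫⁻ s in Ioi c, G (s, r)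
      = ∫⁻ r in Ioi c, ∫⁻ s in Ioo c r, F (s, r) := by
    refine setLIntegral_congr_fun measurableSet_Ioi (fun r hr => ?_)
    have : ∫⁻ s in Ioi c, G (s, r) = ∫⁻ s in Ioi c, (Iio r).indicator (fun s => F (s, r)) s := by
      refine lintegral_congr fun s => ?_
      by_cases h : s < r
      · simp [hG, indicator_of_mem, h, mem_Iio]
      · simp [hG, indicator_of_notMem, h, mem_Iio]
    rw [this, lintegral_indicator measurableSet_Iio,
      Measure.restrict_restrict measurableSet_Iio, Iio_inter_Ioi]
  rw [h1, h2, h3]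

/-- The Hölder-type estimate from the proof of Theorem 1.1: for `w : (0,∞) → [0,∞)`
measurable, `p ≥ 1`, `t ≥ 3`,
`∫_{R/2}^∞ s^{-t} (∫_s^∞ s^β r⁻¹ (r²-s²)^{-β/2} w(r) dr) ds
  ≤ C R^{1-t-(α+a)/p} (∫_{R/2}^∞ r^{α+a-1} w(r)^p dr)^{1/p}`,
where both sides are allowed to be `+∞`. -/
theorem tail_holder_estimate (α β a p t : ℝ)
    (hα1 : 0 < α) (hα2 : α < 2) (hβ1 : 0 < β) (hβ2 : β < 2)
    (ha : 0 ≤ a) (hp : 1 ≤ p) (ht : 3 ≤ t)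
    (w : ℝ → ℝ) (hw : Measurable w) (hw0 : ∀ r, 0 ≤ w r) :
    ∃ C > (0 : ℝ), ∀ R > (0 : ℝ),
      (∫⁻ s in Ioi (R / 2), ENNReal.ofReal (s ^ (-t)) *
          ∫⁻ r in Ioi s, ENNReal.ofReal (s ^ β * r⁻¹ * (r ^ 2 - s ^ 2) ^ (-(β / 2)) * w r)) ≤
      ENNReal.ofReal (C * R ^ (1 - t - (α + a) / p)) *
        (∫⁻ r in Ioi (R / 2), ENNReal.ofReal (r ^ (α + a - 1) * w r ^ p)) ^ (1 / p) := by
  obtain ⟨D, hD, hHold⟩ := holder_bound hα1 ha hβ1 hp w hw hw0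
  set C₀ : ℝ := 2 ^ β / (t - β - 1) + 2 ^ t / (1 - β / 2) with hC₀
  have htβ : (0:ℝ) < t - β - 1 := by linarith
  have hβ2' : (0:ℝ) < 1 - β / 2 := by linarith
  have hC₀pos : 0 < C₀ := by positivity
  set e : ℝ := 1 - t - (α + a) / p with he
  refine ⟨C₀ * D * 2 ^ (-e), by positivity, fun R hR => ?_⟩
  set c : ℝ := R / 2 with hcdef
  have hc : 0 < c := by rw [hcdef]; linarith
  set F : ℝ × ℝ → ℝ≥0∞ := fun z =>
    ENNReal.ofReal (z.1 ^ (β - t) * (z.2 ^ 2 - z.1 ^ 2) ^ (-(β / 2)) * (z.2⁻¹ * w z.2)) with hF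
  have hFm : Measurable F := by
    apply Measurable.ennreal_ofReal
    exact ((measurable_fst.pow_const _).mul
        (((measurable_snd.pow_const 2).sub (measurable_fst.pow_const 2)).pow_const _)).mul
      (measurable_snd.inv.mul (hw.comp measurable_snd))
  set J : ℝ≥0∞ := ∫⁻ r in Ioi c, ENNReal.ofReal (r ^ (α + a - 1) * w r ^ p) with hJ
  have stepA : (∫⁻ s in Ioi c, ENNReal.ofReal (s ^ (-t)) *
        ∫⁻ r in Ioi s, ENNReal.ofReal (s ^ β * r⁻¹ * (r ^ 2 - s ^ 2) ^ (-(β / 2)) * w r))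
      = ∫⁻ s in Ioi c, ∫⁻ r in Ioi s, F (s, r) := by
    refine setLIntegral_congr_fun measurableSet_Ioi (fun s hs => ?_)
    have hs0 : 0 < s := hc.trans hs
    rw [← lintegral_const_mul' _ _ ENNReal.ofReal_ne_top]
    refine lintegral_congr fun r => ?_
    rw [hF, ← ENNReal.ofReal_mul (Real.rpow_nonneg hs0.le _)]
    congr 1
    have e1 : s ^ (β - t) = s ^ β * s ^ (-t) := by
      rw [sub_eq_add_neg, Real.rpow_add hs0]
    rw [e1]; ring
  have stepB : ∫⁻ s in Ioi c, ∫⁻ r in Ioi s, F (s, r)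
      = ∫⁻ r in Ioi c, ∫⁻ s in Ioo c r, F (s, r) := tonelli_tail F hFm
  have stepC : ∫⁻ r in Ioi c, ∫⁻ s in Ioo c r, F (s, r)
      ≤ ∫⁻ r in Ioi c,
          ENNReal.ofReal (C₀ * c ^ (β + 1 - t)) * ENNReal.ofReal (r ^ (-(β + 1)) * w r) := by
    refine lintegral_mono_ae ((ae_restrict_mem measurableSet_Ioi).mono fun r hr => ?_)
    have hr0 : 0 < r := hc.trans hr
    have inner_eq : ∫⁻ s in Ioo c r, F (s, r)
        = (∫⁻ s in Ioo c r, ENNReal.ofReal (s ^ (β - t) * (r ^ 2 - s ^ 2) ^ (-(β / 2)))) *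
            ENNReal.ofReal (r⁻¹ * w r) := by
      rw [← lintegral_mul_const' _ _ ENNReal.ofReal_ne_top]
      refine setLIntegral_congr_fun measurableSet_Ioo (fun s hs => ?_)
      simp only [hF]
      rw [ENNReal.ofReal_mul
        (mul_nonneg (Real.rpow_nonneg (hc.trans hs.1).le _)
          (Real.rpow_nonneg (by nlinarith [hs.2, hc.trans hs.1] : (0:ℝ) ≤ r ^ 2 - s ^ 2) _))]
    rw [inner_eq]
    have hker := kernel_bound hβ1 hβ2 ht hc hr
    refine le_trans (mul_le_mul_left hker _) ?_
    rw [← hC₀]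
    apply le_of_eq
    rw [← ENNReal.ofReal_mul (mul_nonneg hC₀pos.le (by positivity)),
      ← ENNReal.ofReal_mul (mul_nonneg hC₀pos.le (by positivity))]
    congr 1
    have e2 : r ^ (-β) * r⁻¹ = r ^ (-(β + 1)) := by
      rw [← Real.rpow_neg_one r, ← Real.rpow_add hr0]; congr 1; ring
    calc C₀ * (c ^ (β + 1 - t) * r ^ (-β)) * (r⁻¹ * w r)
        = C₀ * c ^ (β + 1 - t) * ((r ^ (-β) * r⁻¹) * w r) := by ring
      _ = C₀ * c ^ (β + 1 - t) * (r ^ (-(β + 1)) * w r) := by rw [e2]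
  have stepD : ∫⁻ r in Ioi c,
        ENNReal.ofReal (C₀ * c ^ (β + 1 - t)) * ENNReal.ofReal (r ^ (-(β + 1)) * w r)
      = ENNReal.ofReal (C₀ * c ^ (β + 1 - t)) *
          ∫⁻ r in Ioi c, ENNReal.ofReal (r ^ (-(β + 1)) * w r) :=
    lintegral_const_mul' _ _ ENNReal.ofReal_ne_top
  have stepE := hHold c hc
  have final : ENNReal.ofReal (C₀ * c ^ (β + 1 - t)) *
        (ENNReal.ofReal (D * c ^ (-β - (α + a) / p)) * J ^ (1 / p))
      = ENNReal.ofReal (C₀ * D * 2 ^ (-e) * R ^ e) * J ^ (1 / p) := by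
    rw [← mul_assoc, ← ENNReal.ofReal_mul (mul_nonneg hC₀pos.le (by positivity))]
    congr 2
    have e3 : c ^ (β + 1 - t) * c ^ (-β - (α + a) / p) = c ^ e := by
      rw [← Real.rpow_add hc]; congr 1; rw [he]; ring
    have e5 : (2:ℝ) ^ (-e) * 2 ^ e = 1 := by
      rw [← Real.rpow_add (by norm_num : (0:ℝ) < 2)]; norm_num
    have e6 : R ^ e = 2 ^ e * c ^ e := by
      rw [show R = 2 * c by rw [hcdef]; ring,
        Real.mul_rpow (by norm_num) hc.le]
    have e7 : (2:ℝ) ^ (-e) * R ^ e = c ^ e := by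
      rw [e6, ← mul_assoc, e5, one_mul]
    calc C₀ * c ^ (β + 1 - t) * (D * c ^ (-β - (α + a) / p))
        = C₀ * D * (c ^ (β + 1 - t) * c ^ (-β - (α + a) / p)) := by ring
      _ = C₀ * D * c ^ e := by rw [e3]
      _ = C₀ * D * (2 ^ (-e) * R ^ e) := by rw [e7]
      _ = C₀ * D * 2 ^ (-e) * R ^ e := by ring
  calc (∫⁻ s in Ioi c, ENNReal.ofReal (s ^ (-t)) *
        ∫⁻ r in Ioi s, ENNReal.ofReal (s ^ β * r⁻¹ * (r ^ 2 - s ^ 2) ^ (-(β / 2)) * w r))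
      = ∫⁻ r in Ioi c, ∫⁻ s in Ioo c r, F (s, r) := by rw [stepA, stepB]
    _ ≤ ∫⁻ r in Ioi c,
          ENNReal.ofReal (C₀ * c ^ (β + 1 - t)) * ENNReal.ofReal (r ^ (-(β + 1)) * w r) := stepC
    _ = ENNReal.ofReal (C₀ * c ^ (β + 1 - t)) *
          ∫⁻ r in Ioi c, ENNReal.ofReal (r ^ (-(β + 1)) * w r) := stepD
    _ ≤ ENNReal.ofReal (C₀ * c ^ (β + 1 - t)) *
          (ENNReal.ofReal (D * c ^ (-β - (α + a) / p)) * J ^ (1 / p)) :=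
        mul_le_mul_right stepE _
    _ = ENNReal.ofReal (C₀ * D * 2 ^ (-e) * R ^ e) * J ^ (1 / p) := final
end
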